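/- For p = 2, d = 1, ρ_0 = (δ_{−1} + δ_1)/2, and Λ ≥ 1/2, the Dirac mass δ_0 is the unique minimizer of E(ν) = W_2²(ρ_0, ν) + Λ·L(ν) among probability measures on ℝ supported in [−1,1]. -/

import Mathlib

open MeasureTheory Metric Filter Set
open scoped ENNReal NNReal Topology

noncomputable section

/-- The support of a measure: points all of whose neighborhoods have positive mass. -/
def msupport {E : Type*} [MetricSpace E] [MeasurableSpace E] (ν : Measure E) : Set E :=
  {x | ∀ r > 0, 0 < ν (ball x r)}

open Classical in
/-- The length functional: `min {α ≥ 0 | α • ν ≥ H¹⌊supp ν}` if `supp ν` is connected,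
`+∞` otherwise (with `min ∅ = +∞`). -/
noncomputable def lengthF {E : Type*} [MetricSpace E] [MeasurableSpace E] [BorelSpace E]
    (ν : Measure E) : ℝ≥0∞ :=
  if IsConnected (msupport ν) then
    sInf {α : ℝ≥0∞ | (μH[1] : Measure E).restrict (msupport ν) ≤ α • ν}
  else ⊤

/-- The p-th power of the p-Wasserstein distance, as an infimum over couplings. -/
noncomputable def Wpp {E : Type*} [MetricSpace E] [MeasurableSpace E]
    (p : ℝ) (μ ν : Measure E) : ℝ≥0∞ :=
  ⨅ (γ : Measure (E × E)) (_ : γ.map Prod.fst = μ ∧ γ.map Prod.snd = ν),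
    ∫⁻ z, edist z.1 z.2 ^ p ∂γ

/-- The energy `W_p^p(ρ₀, ν) + Λ L(ν)`. -/
noncomputable def energyF {E : Type*} [MetricSpace E] [MeasurableSpace E] [BorelSpace E]
    (p Λ : ℝ) (ρ₀ ν : Measure E) : ℝ≥0∞ :=
  Wpp p ρ₀ ν + ENNReal.ofReal Λ * lengthF ν

/-- Kuratowski convergence of a sequence of (closed) sets. -/
def KuraTendsto {E : Type*} [MetricSpace E] (C : ℕ → Set E) (L : Set E) : Prop :=
  (∀ u : ℕ → E, (∀ n, u n ∈ C n) → ∀ x : E, MapClusterPt x atTop u → x ∈ L) ∧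
  (∀ x ∈ L, ∃ u : ℕ → E, (∀ n, u n ∈ C n) ∧ Tendsto u atTop (𝓝 x))


lemma isClosed_msupport (ν : Measure ℝ) : IsClosed (msupport ν) := by
  rw [← isOpen_compl_iff]
  rw [isOpen_iff_forall_mem_open]
  intro x hx
  simp only [msupport, mem_compl_iff, mem_setOf_eq, not_forall, not_lt] at hx
  obtain ⟨r, hr, hball⟩ := hx
  refine ⟨ball x (r/2), ?_, isOpen_ball, by simp [hr]⟩
  intro y hy
  simp only [msupport, mem_compl_iff, mem_setOf_eq, not_forall, not_lt]
  refine ⟨r/2, by positivity, ?_⟩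
  replace hball : ν (ball x r) = 0 := le_antisymm hball zero_le
  refine le_trans (measure_mono ?_) hball.le
  intro z hz
  have := mem_ball.1 hy
  have := mem_ball.1 hz
  rw [mem_ball]
  calc dist z x ≤ dist z y + dist y x := dist_triangle _ _ _
  _ < r/2 + r/2 := by gcongr
  _ = r := by ring

lemma measure_compl_msupport (ν : Measure ℝ) : ν (msupport ν)ᶜ = 0 := by
  apply measure_null_of_locally_null
  intro x hx
  simp only [msupport, mem_compl_iff, mem_setOf_eq, not_forall, not_lt] at hx
  obtain ⟨r, hr, hball⟩ := hx
  exact ⟨ball x r, mem_nhdsWithin_of_mem_nhds (ball_mem_nhds x hr),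
    le_antisymm hball zero_le⟩

lemma msupport_dirac (t : ℝ) : msupport (Measure.dirac t) = {t} := by
  ext x
  simp only [msupport, mem_setOf_eq, mem_singleton_iff]
  constructor
  · intro h
    by_contra hne
    have hd : 0 < dist t x := dist_pos.2 (Ne.symm hne)
    have := h (dist t x) hd
    rw [Measure.dirac_apply' _ measurableSet_ball] at this
    have hnot : t ∉ ball x (dist t x) := by simp [mem_ball]
    rw [indicator_of_notMem hnot] at this
    simp at this
  · rintro rfl r hr
    rw [Measure.dirac_apply' _ measurableSet_ball]
    simp [mem_ball, hr]

lemma eq_dirac_of_msupport_singleton (ν : Measure ℝ) [IsProbabilityMeasure ν] (t : ℝ)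
    (h : msupport ν = {t}) : ν = Measure.dirac t := by
  have hc : ν ({t}ᶜ) = 0 := by
    rw [← h]; exact measure_compl_msupport ν
  ext s hs
  rw [Measure.dirac_apply' _ hs]
  by_cases ht : t ∈ s
  · have h1 : ν s = ν (s ∩ {t}) := by
      rw [← measure_inter_add_diff s (MeasurableSet.singleton t)]
      have : ν (s \ {t}) = 0 := measure_mono_null (diff_subset_compl _ _) hc
      simp [this]
    have h2 : s ∩ {t} = {t} := by
      ext y; simp only [mem_inter_iff, mem_singleton_iff]
      exact ⟨fun h => h.2, fun h => ⟨h ▸ ht, h⟩⟩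
    have h3 : ν {t} = 1 := by
      have := measure_univ (μ := ν)
      rw [← measure_add_measure_compl (MeasurableSet.singleton t)] at this
      rw [hc, add_zero] at this
      exact this
    simp [h1, h2, h3, indicator_apply, ht]
  · have h0 : ν s = 0 := measure_mono_null (fun y hy => by
      simp only [mem_compl_iff, mem_singleton_iff]; rintro rfl; exact ht hy) hc
    rw [indicator_of_notMem ht]; exact h0

lemma edist_sq_eq (x y : ℝ) : edist x y ^ (2:ℝ) = ENNReal.ofReal ((x - y)^2) := by
  rw [edist_dist, ENNReal.ofReal_rpow_of_nonneg dist_nonneg (by norm_num)]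
  congr 1
  rw [Real.dist_eq, show ((2:ℝ) = ((2:ℕ):ℝ)) by norm_num, Real.rpow_natCast, sq_abs]

lemma measurable_cost : Measurable (fun z : ℝ × ℝ => edist z.1 z.2 ^ (2:ℝ)) := by
  apply Measurable.pow_const
  exact (continuous_edist.comp (continuous_fst.prodMk continuous_snd)).measurable

lemma lengthF_dirac (t : ℝ) : lengthF (Measure.dirac t) = 0 := by
  rw [lengthF, if_pos (by rw [msupport_dirac]; exact isConnected_singleton)]
  apply le_antisymm _ zero_le
  apply sInf_le
  simp only [mem_setOf_eq, msupport_dirac, zero_smul]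
  have h0 : (μH[1] : Measure ℝ) {t} = 0 := by
    rw [MeasureTheory.hausdorffMeasure_real]; simp
  rw [Measure.restrict_eq_zero.2 h0]

section rho

variable (Λ : ℝ) (ρ₀ : Measure ℝ)
  (hρ : ρ₀ = (2:ℝ≥0∞)⁻¹ • (Measure.dirac (-1 : ℝ) + Measure.dirac (1 : ℝ)))

include hρ

lemma rho_prob : IsProbabilityMeasure ρ₀ := by
  subst hρ
  constructor
  simp [Measure.smul_apply]
  exact ENNReal.inv_two_add_inv_two

lemma rho_lintegral (f : ℝ → ℝ≥0∞) (hf : Measurable f) :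
    ∫⁻ x, f x ∂ρ₀ = 2⁻¹ * (f (-1) + f 1) := by
  subst hρ
  rw [lintegral_smul_measure, lintegral_add_measure, lintegral_dirac' _ hf,
    lintegral_dirac' _ hf, smul_eq_mul]

lemma rho_compl_null : ρ₀ ({-1, 1} : Set ℝ)ᶜ = 0 := by
  subst hρ
  rw [Measure.smul_apply, Measure.add_apply,
    Measure.dirac_apply' _ (measurableSet_insert.2 (measurableSet_singleton _)).compl,
    Measure.dirac_apply' _ (measurableSet_insert.2 (measurableSet_singleton _)).compl]
  simp

lemma wpp_dirac (t : ℝ) : Wpp 2 ρ₀ (Measure.dirac t) = ENNReal.ofReal (1 + t^2) := by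
  have hval : ∫⁻ x, ENNReal.ofReal ((x - t)^2) ∂ρ₀ = ENNReal.ofReal (1 + t^2) := by
    rw [rho_lintegral ρ₀ hρ _ (by fun_prop)]
    rw [← ENNReal.ofReal_add (by positivity) (by positivity)]
    rw [show (-1 - t)^2 + (1-t)^2 = 2*(1 + t^2) by ring]
    rw [show ((2:ℝ≥0∞)⁻¹ = ENNReal.ofReal (1/2)) by
      rw [ENNReal.ofReal_div_of_pos] <;> norm_num]
    rw [← ENNReal.ofReal_mul (by norm_num)]
    congr 1; ring
  have hp : IsProbabilityMeasure ρ₀ := rho_prob ρ₀ hρ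
  apply le_antisymm
  · apply iInf_le_of_le (ρ₀.prod (Measure.dirac t))
    apply iInf_le_of_le ⟨by simp, by simp⟩
    rw [lintegral_prod _ measurable_cost.aemeasurable]
    rw [← hval]
    apply le_of_eq
    congr 1
    ext x
    simp only [edist_sq_eq]
    exact lintegral_dirac' _ (by fun_prop)
  · apply le_iInf; intro γ; apply le_iInf; rintro ⟨h1, h2⟩
    have hae : ∀ᵐ z ∂γ, z.2 = t := by
      rw [ae_iff]
      have he : {z : ℝ × ℝ | ¬ z.2 = t} = Prod.snd ⁻¹' ({t}ᶜ) := rfl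
      rw [he, ← Measure.map_apply measurable_snd (MeasurableSet.singleton t).compl, h2]
      simp
    refine le_of_eq ?_
    calc ENNReal.ofReal (1 + t^2) = ∫⁻ x, ENNReal.ofReal ((x - t)^2) ∂ρ₀ := hval.symm
    _ = ∫⁻ z, ENNReal.ofReal ((z.1 - t)^2) ∂γ := by
        rw [← h1, lintegral_map (by fun_prop) measurable_fst]
    _ = ∫⁻ z, edist z.1 z.2 ^ (2:ℝ) ∂γ := by
        apply lintegral_congr_ae
        filter_upwards [hae] with z hz
        rw [hz, edist_sq_eq]

lemma energy_dirac (t : ℝ) :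
    energyF 2 Λ ρ₀ (Measure.dirac t) = ENNReal.ofReal (1 + t^2) := by
  rw [energyF, wpp_dirac ρ₀ hρ, lengthF_dirac, mul_zero, add_zero]

end rho

lemma key_real (a b c r Λ : ℝ) (ha : -1 ≤ a) (hb : b ≤ 1) (hab : a < b)
    (hc : c = (2-(b-a))*(a+b)/4) (hr : b - a ≤ r) (hΛ : 1/2 ≤ Λ) :
    1 + (b-a)^2/24 ≤ (1+a)^2 + (((1+c)^3-(1+a)^3)/3 - (1+a)^2*(c-a)
      + (((1-c)^3-(1-b)^3)/3 + (4*c-(1+a)^2)*(b-c)))/r - 2*c + Λ*r := by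
  have hr0 : 0 < r := lt_of_lt_of_le (by linarith) hr
  set I : ℝ := ((1+c)^3-(1+a)^3)/3 - (1+a)^2*(c-a)
      + (((1-c)^3-(1-b)^3)/3 + (4*c-(1+a)^2)*(b-c)) with hI
  set l : ℝ := b - a with hl
  have hPl : 0 ≤ (7/24)*(b^3-a^3) + (1/8)*a*b*(b-a) + (1/4)*a^2*b^2 - (1/8)*(a^4+b^4) := by
    have h24 : 24*((7/24)*(b^3-a^3) + (1/8)*a*b*(b-a) + (1/4)*a^2*b^2 - (1/8)*(a^4+b^4))
        = (b-a)*((a-b)^2 + 3*(a+b)^2*(2-(b-a))) := by ring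
    nlinarith [mul_nonneg (le_of_lt (sub_pos.2 hab))
      (add_nonneg (sq_nonneg (a-b)) (mul_nonneg (by positivity : (0:ℝ) ≤ 3*(a+b)^2)
        (by linarith : (0:ℝ) ≤ 2-(b-a))))]
  have hPpl : 0 ≤ l + (1+a)^2 - 2*c - 1 - l^2/24 := by
    rw [hl, hc]
    nlinarith [sq_nonneg (a+b), sq_nonneg a, sq_nonneg b]
  have hN : 0 ≤ r*r/2 + r*((1+a)^2 - 2*c - 1 - l^2/24) + I := by
    have hid : r*r/2 + r*((1+a)^2 - 2*c - 1 - l^2/24) + I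
        = ((7/24)*(b^3-a^3) + (1/8)*a*b*(b-a) + (1/4)*a^2*b^2 - (1/8)*(a^4+b^4))
          + (r-l)*(l + (1+a)^2 - 2*c - 1 - l^2/24) + (r-l)^2/2 := by
      rw [hI, hl, hc]; ring
    rw [hid]
    have h1 : 0 ≤ (r-l)*(l + (1+a)^2 - 2*c - 1 - l^2/24) :=
      mul_nonneg (by rw [hl]; linarith) hPpl
    have h2 : 0 ≤ (r-l)^2/2 := by positivity
    linarith
  have key2 : 1 + l^2/24 ≤ (1+a)^2 + I/r - 2*c + r/2 := by
    rw [← sub_nonneg]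
    have hq : (1+a)^2 + I/r - 2*c + r/2 - (1+l^2/24)
        = (r*r/2 + r*((1+a)^2 - 2*c - 1 - l^2/24) + I)/r := by
      field_simp; ring
    rw [hq]
    exact div_nonneg hN hr0.le
  have hfin : r/2 ≤ Λ*r := by nlinarith
  linarith

lemma lint_ofReal_Ioc (u v : ℝ) (huv : u ≤ v) (g : ℝ → ℝ) (hg : Continuous g)
    (hnn : ∀ y ∈ Set.Ioc u v, 0 ≤ g y) :
    ∫⁻ y, ENNReal.ofReal (g y) ∂(volume.restrict (Set.Ioc u v))
      = ENNReal.ofReal (∫ y in u..v, g y) := by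
  rw [intervalIntegral.integral_of_le huv,
    ← ofReal_integral_eq_lintegral_ofReal (hg.integrableOn_Ioc)
      ((ae_restrict_iff' measurableSet_Ioc).2 (ae_of_all _ hnn))]

lemma integ1 (u v m : ℝ) :
    ∫ y in u..v, ((1+y)^2 - m) = ((1+v)^3-(1+u)^3)/3 - m*(v-u) := by
  have hd : ∀ y ∈ Set.uIcc u v, HasDerivAt (fun y => (1+y)^3/3 - m*y) ((1+y)^2 - m) y := by
    intro y _
    have h2 := ((((hasDerivAt_id y).const_add 1).pow 3).div_const 3).sub
      ((hasDerivAt_id y).const_mul m)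
    convert h2 using 1
    · rfl
    · rfl
    · rfl
    · simp only [id]; push_cast; ring
  rw [intervalIntegral.integral_eq_sub_of_hasDerivAt hd
    ((by continuity : Continuous fun y : ℝ => (1+y)^2 - m).intervalIntegrable u v)]
  ring

lemma integ2 (u v c m : ℝ) :
    ∫ y in u..v, ((1-y)^2 + 4*c - m) = ((1-u)^3-(1-v)^3)/3 + (4*c-m)*(v-u) := by
  have hd : ∀ y ∈ Set.uIcc u v,
      HasDerivAt (fun y => -(1-y)^3/3 + (4*c-m)*y) ((1-y)^2 + 4*c - m) y := by
    intro y _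
    have h2 := (((((hasDerivAt_id y).neg.const_add 1).pow 3).div_const 3).neg).add
      ((hasDerivAt_id y).const_mul (4*c-m))
    convert h2 using 1
    · rfl
    · rfl
    · funext z; simp only [id, Pi.add_apply, Pi.neg_apply, Pi.pow_apply]; ring
    · simp only [id, Pi.neg_apply]; push_cast; ring
  rw [intervalIntegral.integral_eq_sub_of_hasDerivAt hd
    ((by continuity : Continuous fun y : ℝ => (1-y)^2 + 4*c - m).intervalIntegrable u v)]
  ring

lemma psi_lint (a b c m : ℝ) (hac : a ≤ c) (hcb : c ≤ b)
    (hm1 : ∀ y ∈ Set.Icc a b, y ≤ c → m ≤ (1+y)^2)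
    (hm2 : ∀ y ∈ Set.Icc a b, c ≤ y → m ≤ (1-y)^2 + 4*c) :
    ∫⁻ y, ENNReal.ofReal ((if y ≤ c then (1+y)^2 else (1-y)^2 + 4*c) - m)
        ∂(volume.restrict (Set.Icc a b))
      = ENNReal.ofReal (((1+c)^3-(1+a)^3)/3 - m*(c-a)
          + (((1-c)^3-(1-b)^3)/3 + (4*c-m)*(b-c))) := by
  have hab : a ≤ b := le_trans hac hcb
  rw [← Measure.restrict_congr_set (Ioc_ae_eq_Icc)]
  rw [← Set.Ioc_union_Ioc_eq_Ioc hac hcb,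
    Measure.restrict_union (Set.Ioc_disjoint_Ioc_of_le le_rfl) measurableSet_Ioc,
    lintegral_add_measure]
  have e1 : ∫⁻ y, ENNReal.ofReal ((if y ≤ c then (1+y)^2 else (1-y)^2 + 4*c) - m)
      ∂(volume.restrict (Set.Ioc a c)) = ENNReal.ofReal (((1+c)^3-(1+a)^3)/3 - m*(c-a)) := by
    rw [setLIntegral_congr_fun measurableSet_Ioc
      (fun y hy => by rw [if_pos hy.2])]
    rw [lint_ofReal_Ioc a c hac _ (by fun_prop)
      (fun y hy => sub_nonneg.2 (hm1 y ⟨hy.1.le, le_trans hy.2 hcb⟩ hy.2))]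
    rw [integ1]
  have e2 : ∫⁻ y, ENNReal.ofReal ((if y ≤ c then (1+y)^2 else (1-y)^2 + 4*c) - m)
      ∂(volume.restrict (Set.Ioc c b))
      = ENNReal.ofReal (((1-c)^3-(1-b)^3)/3 + (4*c-m)*(b-c)) := by
    rw [setLIntegral_congr_fun measurableSet_Ioc
      (fun y hy => by rw [if_neg (not_le.2 hy.1)])]
    rw [lint_ofReal_Ioc c b hcb _ (by fun_prop)
      (fun y hy => sub_nonneg.2 (hm2 y ⟨le_trans hac hy.1.le, hy.2⟩ hy.1.le))]
    rw [integ2]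
  rw [e1, e2, ← ENNReal.ofReal_add]
  · rw [← integ1 a c m]
    apply intervalIntegral.integral_nonneg hac
    intro y hy
    exact sub_nonneg.2 (hm1 y ⟨hy.1, le_trans hy.2 hcb⟩ hy.2)
  · rw [← integ2 c b c m]
    apply intervalIntegral.integral_nonneg hcb
    intro y hy
    exact sub_nonneg.2 (hm2 y ⟨le_trans hac hy.1, hy.2⟩ hy.1)

set_option maxHeartbeats 2000000 in
lemma crux (Λ : ℝ) (hΛ : 1/2 ≤ Λ) (ρ₀ : Measure ℝ)
    (hρ : ρ₀ = (2:ℝ≥0∞)⁻¹ • (Measure.dirac (-1 : ℝ) + Measure.dirac (1 : ℝ)))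
    (ν : Measure ℝ) (hν : IsProbabilityMeasure ν) (a b : ℝ)
    (ha : -1 ≤ a) (hb : b ≤ 1) (hab : a < b)
    (hνc : ν (Set.Icc a b)ᶜ = 0) (α : ℝ≥0∞)
    (hα : (volume.restrict (Set.Icc a b)) ≤ α • ν) :
    ENNReal.ofReal (1 + (b-a)^2/24) ≤ Wpp 2 ρ₀ ν + ENNReal.ofReal Λ * α := by
  by_cases hαtop : α = ⊤
  · rw [hαtop, ENNReal.mul_top (by
      simp only [ne_eq, ENNReal.ofReal_eq_zero, not_le]; linarith)]
    simp
  -- α finite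
  set r : ℝ := α.toReal with hrdef
  have hαr : α = ENNReal.ofReal r := (ENNReal.ofReal_toReal hαtop).symm
  have hr : b - a ≤ r := by
    have h1 := (Measure.le_iff'.1 hα) (Set.Icc a b)
    rw [Measure.restrict_apply_self, Real.volume_Icc, Measure.smul_apply, smul_eq_mul] at h1
    have h2 : ν (Set.Icc a b) ≤ 1 := prob_le_one
    have h3 : ENNReal.ofReal (b - a) ≤ α := by
      calc ENNReal.ofReal (b-a) ≤ α * ν (Set.Icc a b) := h1
      _ ≤ α * 1 := by exact mul_le_mul_right h2 α
      _ = α := mul_one α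
    rw [hαr] at h3
    exact (ENNReal.ofReal_le_ofReal_iff ENNReal.toReal_nonneg).1 h3
  have hr0 : 0 < r := lt_of_lt_of_le (by linarith) hr
  have hα0 : α ≠ 0 := by
    rw [hαr]; simp only [ne_eq, ENNReal.ofReal_eq_zero, not_le]; linarith
  set c : ℝ := (2-(b-a))*(a+b)/4 with hc
  set m : ℝ := (1+a)^2 with hm
  have hmb : m = (1-b)^2 + 4*c := by rw [hm, hc]; ring
  have hac : a ≤ c := by rw [hc]; nlinarith
  have hcb : c ≤ b := by rw [hc]; nlinarith
  have hc1 : c ≤ 1 := le_trans hcb hb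
  have hm0 : (0:ℝ) ≤ m := by rw [hm]; positivity
  have hmc : 2*c ≤ m := by
    rcases le_or_gt c 0 with h | h
    · linarith
    · rw [hmb]; nlinarith [sq_nonneg (1-b)]
  have hm1 : ∀ y ∈ Set.Icc a b, y ≤ c → m ≤ (1+y)^2 := by
    intro y hy _; rw [hm]; nlinarith [hy.1]
  have hm2 : ∀ y ∈ Set.Icc a b, c ≤ y → m ≤ (1-y)^2 + 4*c := by
    intro y hy _; rw [hmb]; nlinarith [hy.2]
  set ψ : ℝ → ℝ := fun y => if y ≤ c then (1+y)^2 else (1-y)^2 + 4*c with hψ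
  set Φ : ℝ → ℝ := fun x => if x < 0 then (4:ℝ) else 4-4*c with hΦ
  have hψm : ∀ y ∈ Set.Icc a b, m ≤ ψ y := by
    intro y hy
    simp only [hψ]
    by_cases h : y ≤ c
    · rw [if_pos h]; exact hm1 y hy h
    · rw [if_neg h]; exact hm2 y hy (le_of_lt (not_le.1 h))
  have hψnn : ∀ y ∈ Set.Icc a b, 0 ≤ ψ y := fun y hy => le_trans hm0 (hψm y hy)
  have hΦnn : ∀ x, 0 ≤ Φ x := by
    intro x; simp only [hΦ]; split_ifs <;> linarith
  have hψmeas : Measurable ψ := by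
    apply Measurable.ite (measurableSet_le measurable_id measurable_const) <;> fun_prop
  have hΦmeas : Measurable Φ := by
    apply Measurable.ite (measurableSet_lt measurable_id measurable_const) <;> fun_prop
  have hpoint : ∀ x ∈ ({-1,1} : Set ℝ), ∀ y ∈ Set.Icc a b,
      ψ y + Φ x ≤ (x-y)^2 + 4 := by
    intro x hx y hy
    simp only [Set.mem_insert_iff, Set.mem_singleton_iff] at hx
    have hya := hy.1
    have hyb := hy.2
    simp only [hψ, hΦ]
    rcases hx with rfl | rfl
    · rw [if_pos (show (-1:ℝ) < 0 by norm_num)]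
      by_cases h : y ≤ c
      · rw [if_pos h]; nlinarith
      · rw [if_neg h]; push_neg at h; nlinarith
    · rw [if_neg (show ¬ (1:ℝ) < 0 by norm_num)]
      by_cases h : y ≤ c
      · rw [if_pos h]; nlinarith
      · rw [if_neg h]; nlinarith
  -- the closed-form value I
  set I : ℝ := ((1+c)^3-(1+a)^3)/3 - m*(c-a)
      + (((1-c)^3-(1-b)^3)/3 + (4*c-m)*(b-c)) with hI
  have hInn : 0 ≤ I := by
    rw [hI]
    have hA : 0 ≤ ((1+c)^3-(1+a)^3)/3 - m*(c-a) := by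
      rw [← integ1 a c m]
      apply intervalIntegral.integral_nonneg hac
      intro y hy
      exact sub_nonneg.2 (hm1 y ⟨hy.1, le_trans hy.2 hcb⟩ hy.2)
    have hB : 0 ≤ ((1-c)^3-(1-b)^3)/3 + (4*c-m)*(b-c) := by
      rw [← integ2 c b c m]
      apply intervalIntegral.integral_nonneg hcb
      intro y hy
      exact sub_nonneg.2 (hm2 y ⟨le_trans hac hy.1, hy.2⟩ hy.1)
    linarith
  -- lower bound on Wpp
  have hW : ENNReal.ofReal (m + I/r - 2*c) ≤ Wpp 2 ρ₀ ν := by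
    apply le_iInf; intro γ; apply le_iInf; rintro ⟨h1, h2⟩
    have hγuniv : γ Set.univ = 1 := by
      have h0 := (rho_prob ρ₀ hρ).measure_univ
      rw [← h1, Measure.map_apply measurable_fst MeasurableSet.univ,
        Set.preimage_univ] at h0
      exact h0
    have haex : ∀ᵐ z ∂γ, z.1 ∈ ({-1,1} : Set ℝ) := by
      rw [ae_iff]
      have he : {z : ℝ × ℝ | ¬ z.1 ∈ ({-1,1} : Set ℝ)} = Prod.fst ⁻¹' (({-1,1} : Set ℝ)ᶜ) := rfl
      rw [he, ← Measure.map_apply measurable_fst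
        (measurableSet_insert.2 (measurableSet_singleton _)).compl, h1]
      exact rho_compl_null ρ₀ hρ
    have haey : ∀ᵐ z ∂γ, z.2 ∈ Set.Icc a b := by
      rw [ae_iff]
      have he : {z : ℝ × ℝ | ¬ z.2 ∈ Set.Icc a b} = Prod.snd ⁻¹' ((Set.Icc a b)ᶜ) := rfl
      rw [he, ← Measure.map_apply measurable_snd measurableSet_Icc.compl, h2]
      exact hνc
    -- the integrated dual bound
    have hBound : (∫⁻ z, (ENNReal.ofReal (ψ z.2) + ENNReal.ofReal (Φ z.1)) ∂γ)
        ≤ (∫⁻ z, edist z.1 z.2 ^ (2:ℝ) ∂γ) + 4 := by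
      have hrhs : (∫⁻ z, edist z.1 z.2 ^ (2:ℝ) ∂γ) + 4
          = ∫⁻ z, (edist z.1 z.2 ^ (2:ℝ) + 4) ∂γ := by
        rw [lintegral_add_right _ measurable_const, lintegral_const, hγuniv, mul_one]
      rw [hrhs]
      apply lintegral_mono_ae
      filter_upwards [haex, haey] with z hzx hzy
      rw [edist_sq_eq]
      calc ENNReal.ofReal (ψ z.2) + ENNReal.ofReal (Φ z.1)
          = ENNReal.ofReal (ψ z.2 + Φ z.1) :=
            (ENNReal.ofReal_add (hψnn _ hzy) (hΦnn _)).symm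
        _ ≤ ENNReal.ofReal ((z.1 - z.2)^2 + 4) :=
            ENNReal.ofReal_le_ofReal (hpoint _ hzx _ hzy)
        _ = ENNReal.ofReal ((z.1 - z.2)^2) + 4 := by
            rw [ENNReal.ofReal_add (by positivity) (by norm_num)]
            norm_num
    have hsplit : (∫⁻ z, (ENNReal.ofReal (ψ z.2) + ENNReal.ofReal (Φ z.1)) ∂γ)
        = (∫⁻ y, ENNReal.ofReal (ψ y) ∂ν) + (∫⁻ x, ENNReal.ofReal (Φ x) ∂ρ₀) := by
      rw [lintegral_add_left (by fun_prop) _]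
      congr 1
      · rw [← h2, lintegral_map (by fun_prop) measurable_snd]
      · rw [← h1, lintegral_map (by fun_prop) measurable_fst]
    have hΦval : (∫⁻ x, ENNReal.ofReal (Φ x) ∂ρ₀) = ENNReal.ofReal (4 - 2*c) := by
      rw [rho_lintegral ρ₀ hρ _ (by fun_prop)]
      rw [hΦ]; dsimp only
      rw [if_pos (by norm_num : (-1:ℝ) < 0), if_neg (by norm_num : ¬ (1:ℝ) < 0)]
      rw [← ENNReal.ofReal_add (by norm_num) (by linarith)]
      rw [show ((2:ℝ≥0∞)⁻¹ = ENNReal.ofReal (1/2)) by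
        rw [ENNReal.ofReal_div_of_pos] <;> norm_num]
      rw [← ENNReal.ofReal_mul (by norm_num)]
      congr 1; ring
    have hψval : ENNReal.ofReal m + ENNReal.ofReal (I/r)
        ≤ ∫⁻ y, ENNReal.ofReal (ψ y) ∂ν := by
      have hcongr : ∫⁻ y, ENNReal.ofReal (ψ y) ∂ν
          = ∫⁻ y, (ENNReal.ofReal m + ENNReal.ofReal (ψ y - m)) ∂ν := by
        apply lintegral_congr_ae
        have haeν : ∀ᵐ y ∂ν, y ∈ Set.Icc a b := by
          rw [ae_iff]
          exact hνc
        filter_upwards [haeν] with y hy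
        rw [← ENNReal.ofReal_add hm0 (sub_nonneg.2 (hψm y hy))]
        congr 1; ring
      rw [hcongr, lintegral_add_left measurable_const, lintegral_const,
        hν.measure_univ, mul_one]
      apply add_le_add_right
      -- use the density hypothesis
      have h6 : ENNReal.ofReal I ≤ α * ∫⁻ y, ENNReal.ofReal (ψ y - m) ∂ν := by
        rw [← smul_eq_mul, ← lintegral_smul_measure]
        rw [← psi_lint a b c m hac hcb hm1 hm2]
        exact lintegral_mono' hα (le_refl _)
      have h7 : α⁻¹ * ENNReal.ofReal I ≤ ∫⁻ y, ENNReal.ofReal (ψ y - m) ∂ν := by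
        calc α⁻¹ * ENNReal.ofReal I
            ≤ α⁻¹ * (α * ∫⁻ y, ENNReal.ofReal (ψ y - m) ∂ν) := mul_le_mul_right h6 _
          _ = ∫⁻ y, ENNReal.ofReal (ψ y - m) ∂ν := by
              rw [← mul_assoc, ENNReal.inv_mul_cancel hα0 hαtop, one_mul]
      calc ENNReal.ofReal (I/r) = α⁻¹ * ENNReal.ofReal I := by
            rw [hαr, ← ENNReal.ofReal_inv_of_pos hr0,
              ← ENNReal.ofReal_mul (by positivity)]
            congr 1; field_simp
        _ ≤ _ := h7
    -- combine
    have hfinal : ENNReal.ofReal (m + I/r - 2*c) + 4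
        ≤ (∫⁻ z, edist z.1 z.2 ^ (2:ℝ) ∂γ) + 4 := by
      calc ENNReal.ofReal (m + I/r - 2*c) + 4
          = ENNReal.ofReal m + ENNReal.ofReal (I/r) + ENNReal.ofReal (4 - 2*c) := by
            have hIr : 0 ≤ I/r := div_nonneg hInn hr0.le
            rw [← ENNReal.ofReal_add hm0 hIr,
              ← ENNReal.ofReal_add (by linarith) (by linarith)]
            rw [show ENNReal.ofReal (m + I/r + (4 - 2*c))
              = ENNReal.ofReal ((m + I/r - 2*c) + 4) by congr 1; ring]
            have hIr2 : 0 ≤ I/r := div_nonneg hInn hr0.le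
            rw [ENNReal.ofReal_add (by linarith) (by norm_num)]
            norm_num
        _ ≤ (∫⁻ y, ENNReal.ofReal (ψ y) ∂ν) + (∫⁻ x, ENNReal.ofReal (Φ x) ∂ρ₀) := by
            rw [hΦval]
            exact add_le_add_left hψval _
        _ = ∫⁻ z, (ENNReal.ofReal (ψ z.2) + ENNReal.ofReal (Φ z.1)) ∂γ := hsplit.symm
        _ ≤ _ := hBound
    exact (ENNReal.add_le_add_iff_right (by norm_num : (4:ℝ≥0∞) ≠ ⊤)).1 hfinal
  -- conclude
  calc ENNReal.ofReal (1 + (b-a)^2/24)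
      ≤ ENNReal.ofReal ((m + I/r - 2*c) + Λ*r) := by
        apply ENNReal.ofReal_le_ofReal
        have hk := key_real a b c r Λ ha hb hab hc hr hΛ
        rw [← hm] at hk
        rw [← hI] at hk
        linarith
    _ = ENNReal.ofReal (m + I/r - 2*c) + ENNReal.ofReal (Λ*r) := by
        have hIr : 0 ≤ I/r := div_nonneg hInn hr0.le
        rw [ENNReal.ofReal_add (by linarith) (mul_nonneg (by linarith) hr0.le)]
    _ ≤ Wpp 2 ρ₀ ν + ENNReal.ofReal Λ * α := by
        apply add_le_add hW
        rw [hαr, ← ENNReal.ofReal_mul (by linarith)]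

lemma le_add_mul_sInf {K W c : ℝ≥0∞} {A : Set ℝ≥0∞} (hc0 : c ≠ 0) (hct : c ≠ ⊤)
    (h : ∀ α ∈ A, K ≤ W + c * α) : K ≤ W + c * sInf A := by
  have h1 : ∀ α ∈ A, c⁻¹ * (K - W) ≤ α := by
    intro α hα
    have h2 : K - W ≤ c * α := tsub_le_iff_right.2 ((h α hα).trans (le_of_eq (add_comm _ _)))
    calc c⁻¹ * (K - W) ≤ c⁻¹ * (c * α) := mul_le_mul_right h2 _
    _ = α := by rw [← mul_assoc, ENNReal.inv_mul_cancel hc0 hct, one_mul]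
  have h3 : c⁻¹ * (K - W) ≤ sInf A := le_sInf h1
  have h4 : K - W ≤ c * sInf A := by
    calc K - W = c * (c⁻¹ * (K - W)) := by
          rw [← mul_assoc, ENNReal.mul_inv_cancel hc0 hct, one_mul]
    _ ≤ c * sInf A := mul_le_mul_right h3 _
  calc K ≤ c * sInf A + W := tsub_le_iff_right.1 h4
  _ = W + c * sInf A := add_comm _ _

/-- for `p = 2`, `ρ₀ = (δ_{-1} + δ_1)/2` on `ℝ` and `Λ ≥ 1/2`, the Dirac
mass `δ₀` is the unique minimizer of `E(ν) = W₂²(ρ₀,ν) + Λ L(ν)` among probability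
measures supported in `[-1,1]`. -/
theorem stmt_18 (Λ : ℝ) (hΛ : 1 / 2 ≤ Λ) (ρ₀ : Measure ℝ)
    (hρ : ρ₀ = (2:ℝ≥0∞)⁻¹ • (Measure.dirac (-1 : ℝ) + Measure.dirac (1 : ℝ))) :
    (∀ ν : Measure ℝ, IsProbabilityMeasure ν → msupport ν ⊆ Icc (-1 : ℝ) 1 →
      energyF 2 Λ ρ₀ (Measure.dirac (0:ℝ)) ≤ energyF 2 Λ ρ₀ ν) ∧
    (∀ ν : Measure ℝ, IsProbabilityMeasure ν → msupport ν ⊆ Icc (-1 : ℝ) 1 →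
      energyF 2 Λ ρ₀ ν = energyF 2 Λ ρ₀ (Measure.dirac (0:ℝ)) →
      ν = Measure.dirac (0:ℝ)) := by
  have hδ : energyF 2 Λ ρ₀ (Measure.dirac (0:ℝ)) = 1 := by
    rw [energy_dirac Λ ρ₀ hρ 0]
    norm_num
  have hΛ0 : ENNReal.ofReal Λ ≠ 0 := by
    simp only [ne_eq, ENNReal.ofReal_eq_zero, not_le]; linarith
  have main : ∀ ν : Measure ℝ, IsProbabilityMeasure ν → msupport ν ⊆ Icc (-1 : ℝ) 1 →
      1 ≤ energyF 2 Λ ρ₀ ν ∧ (energyF 2 Λ ρ₀ ν = 1 → ν = Measure.dirac (0:ℝ)) := by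
    intro ν hν hsupp
    by_cases hcon : IsConnected (msupport ν)
    · -- connected support
      have hclosed := isClosed_msupport ν
      have hcomp : IsCompact (msupport ν) :=
        IsCompact.of_isClosed_subset isCompact_Icc hclosed hsupp
      set S := msupport ν with hSdef
      set a := sInf S with hadef
      set b := sSup S with hbdef
      have hSeq : S = Icc a b := eq_Icc_of_connected_compact hcon hcomp
      have hne : S.Nonempty := hcon.nonempty
      have haS : a ∈ S := hcomp.sInf_mem hne
      have hbS : b ∈ S := hcomp.sSup_mem hne
      have ha : -1 ≤ a := (hsupp haS).1
      have hb : b ≤ 1 := (hsupp hbS).2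
      have hab : a ≤ b := by
        have := hSeq ▸ haS
        exact (nonempty_Icc).1 ⟨a, this⟩
      rcases eq_or_lt_of_le hab with heqab | hlt
      · -- singleton support
        have hSsing : S = {a} := by rw [hSeq, ← heqab, Icc_self]
        haveI := hν
        have hνd : ν = Measure.dirac a := eq_dirac_of_msupport_singleton ν a hSsing
        rw [hνd, energy_dirac Λ ρ₀ hρ a]
        constructor
        · rw [← ENNReal.ofReal_one]
          exact ENNReal.ofReal_le_ofReal (by nlinarith)
        · intro h
          rw [← ENNReal.ofReal_one] at h
          have h2 : 1 + a^2 = 1 :=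
            (ENNReal.ofReal_eq_ofReal_iff (by positivity) (by norm_num)).1 h
          have h3 : a = 0 := by nlinarith
          rw [h3]
      · -- a < b
        have hνc : ν (Icc a b)ᶜ = 0 := by
          rw [← hSeq]; exact measure_compl_msupport ν
        have hlen : lengthF ν = sInf {α : ℝ≥0∞ | volume.restrict (Icc a b) ≤ α • ν} := by
          rw [lengthF, if_pos hcon]
          congr 1
          rw [MeasureTheory.hausdorffMeasure_real, ← hSdef, hSeq]
        have hbig : ENNReal.ofReal (1 + (b-a)^2/24) ≤ energyF 2 Λ ρ₀ ν := by
          rw [energyF, hlen]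
          apply le_add_mul_sInf hΛ0 ENNReal.ofReal_ne_top
          intro α hα
          exact crux Λ hΛ ρ₀ hρ ν hν a b ha hb hlt hνc α hα
        constructor
        · refine le_trans ?_ hbig
          rw [← ENNReal.ofReal_one]
          exact ENNReal.ofReal_le_ofReal (by nlinarith [sq_nonneg (b-a)])
        · intro h
          exfalso
          rw [h, ← ENNReal.ofReal_one] at hbig
          have h2 : 1 + (b-a)^2/24 ≤ 1 :=
            (ENNReal.ofReal_le_ofReal_iff (by norm_num)).1 hbig
          nlinarith [sq_nonneg (b-a), sub_pos.2 hlt]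
    · -- disconnected support: infinite length
      have hlen : lengthF ν = ⊤ := by rw [lengthF, if_neg hcon]
      have he : energyF 2 Λ ρ₀ ν = ⊤ := by
        rw [energyF, hlen, ENNReal.mul_top hΛ0, add_top]
      constructor
      · rw [he]; exact le_top
      · intro h; rw [he] at h; exact absurd h (by norm_num)
  constructor
  · intro ν hν hsupp
    rw [hδ]
    exact (main ν hν hsupp).1
  · intro ν hν hsupp heq
    rw [hδ] at heq
    exact (main ν hν hsupp).2 heq

end
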